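/- arXiv:0710.5838 — 3 statements merged into one kernel-verified Lean document; each statement's English description precedes it below -/
import Mathlib

section
/- A nonempty finite fraction F ⊆ D = {−1,+1}^m is a coset of a subgroup of D if and only if for every exponent vector γ ∈ Fin m → ZMod 2, the integer Σ_{t ∈ F} X^γ(t) belongs to {−|F|, 0, |F|}. (Equivalently: any two monomial interactions X^α, X^β are, on F, either orthogonal or totally aliased, since Σ_{t∈F} X^α(t)X^β(t) = Σ_{t∈F} X^{α+β}(t).) -/
/-! If `F = aH` and `X^γ` is nontrivial on `H`, right multiplication by some `h ∈ H` with
`X^γ h = -1` permutes `F` and negates `∑_{t ∈ F} X^γ(t)`; otherwise `X^γ` is constant on `F`.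

Conversely, the hypothesis says `S_γ³ = |F|² S_γ` for `S_γ = ∑_{t ∈ F} X^γ(t)`. By Fourier
inversion on `D` this means that each `w ∈ D` has exactly `|F|² · 1_F(w)` representations
`w = tuv` with `t, u, v ∈ F`. So `F` is closed under `(t, u, v) ↦ tu⁻¹v = tuv`, and a nonempty
subset of a group closed under that operation is a coset. -/

open Pointwise

/-- The monomial `X^γ` on the full factorial design `D = {-1,+1}^m`:
`X^γ(t) = ∏_{i : γ i = 1} t i`. -/
def Xmon {m : ℕ} (γ : Fin m → ZMod 2) (t : Fin m → ℤˣ) : ℤˣ :=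
  ∏ i ∈ Finset.univ.filter (fun i => γ i = 1), t i

open Finset

section Coset

variable {G : Type*} [Group G]

theorem exists_subgroup_eq_smul_of_mul_inv_mul_mem {F : Set G} {a : G} (ha : a ∈ F)
    (hF : ∀ t ∈ F, ∀ u ∈ F, ∀ v ∈ F, t * u⁻¹ * v ∈ F) :
    ∃ H : Subgroup G, F = a • (H : Set G) := by
  refine ⟨{ carrier := {x | a * x ∈ F}
            one_mem' := by simpa using ha
            mul_mem' := fun {x y} hx hy => by simpa [mul_assoc] using hF _ hx _ ha _ hy
            inv_mem' := fun {x} hx => by simpa [mul_assoc] using hF _ ha _ hx _ ha }, ?_⟩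
  ext x
  simp [Set.mem_smul_set_iff_inv_smul_mem]

theorem sum_coe_units_mem_of_coe_eq_smul {F : Finset G} {a : G} {H : Subgroup G}
    (hF : (F : Set G) = a • (H : Set G)) (χ : G →* ℤˣ) :
    ∑ t ∈ F, (χ t : ℤ) ∈ ({-(#F : ℤ), 0, (#F : ℤ)} : Set ℤ) := by
  have hmem (t : G) : t ∈ F ↔ a⁻¹ * t ∈ H := by
    rw [← mem_coe, hF, Set.mem_smul_set_iff_inv_smul_mem, smul_eq_mul, SetLike.mem_coe]
  by_cases hχ : ∀ h ∈ H, χ h = 1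
  · have hconst : ∀ t ∈ F, (χ t : ℤ) = χ a := fun t ht => by
      have := hχ _ ((hmem t).1 ht)
      rw [map_mul, map_inv, inv_mul_eq_one] at this
      rw [this]
    rw [sum_congr rfl hconst, sum_const, nsmul_eq_mul]
    rcases Int.units_eq_one_or (χ a) with h | h <;> simp [h]
  · obtain ⟨h, hH, hχh⟩ := not_forall₂.1 hχ
    have hχh' : (χ h : ℤ) = -1 := by
      rcases Int.units_eq_one_or (χ h) with h' | h' <;> simp_all
    have hinv : ∑ t ∈ F, (χ (t * h) : ℤ) = ∑ t ∈ F, (χ t : ℤ) :=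
      sum_equiv (Equiv.mulRight h) (fun t => by simp [hmem, ← mul_assoc, H.mul_mem_cancel_right hH])
        (fun _ _ => rfl)
    simp only [map_mul, Units.val_mul, hχh', mul_neg_one, sum_neg_distrib] at hinv
    right; left
    linarith

end Coset

section Design

variable {m : ℕ}

theorem design_inv_eq_self (t : Fin m → ℤˣ) : t⁻¹ = t :=
  funext fun i => Int.units_inv_eq_self (t i)

@[simp]
theorem Xmon_mul (γ : Fin m → ZMod 2) (t u : Fin m → ℤˣ) :
    Xmon γ (t * u) = Xmon γ t * Xmon γ u := by
  simp [Xmon, prod_mul_distrib]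

theorem sum_Xmon_eq_ite (x : Fin m → ℤˣ) :
    ∑ γ : Fin m → ZMod 2, (Xmon γ x : ℤ) = if x = 1 then 2 ^ m else 0 := by
  have hfactor (γ : Fin m → ZMod 2) :
      (Xmon γ x : ℤ) = ∏ i, if γ i = 1 then (x i : ℤ) else 1 := by
    rw [Xmon, Units.coe_prod, prod_filter]
  simp_rw [hfactor]
  rw [← Fintype.prod_sum (fun i (c : ZMod 2) => if c = 1 then (x i : ℤ) else 1)]
  have hcoord (i : Fin m) : ∑ c : ZMod 2, (if c = 1 then (x i : ℤ) else 1) = 1 + x i := by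
    rw [show (univ : Finset (ZMod 2)) = {0, 1} from rfl]
    simp
  simp_rw [hcoord]
  split_ifs with hx
  · simp [hx]
  · obtain ⟨i, hi⟩ := Function.ne_iff.1 hx
    refine prod_eq_zero (mem_univ i) ?_
    rcases Int.units_eq_one_or (x i) with h | h
    · exact absurd h hi
    · simp [h]

theorem sum_sum_Xmon_eq_card {ι : Type*} (s : Finset ι) (f : ι → Fin m → ℤˣ) :
    ∑ γ : Fin m → ZMod 2, ∑ i ∈ s, (Xmon γ (f i) : ℤ) = 2 ^ m * #{i ∈ s | f i = 1} := by
  rw [sum_comm]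
  simp_rw [sum_Xmon_eq_ite]
  rw [sum_ite, sum_const_zero, add_zero, sum_const, nsmul_eq_mul, mul_comm]

theorem card_filter_mul_mul_eq {F : Finset (Fin m → ℤˣ)}
    (hsum : ∀ γ : Fin m → ZMod 2,
      (∑ t ∈ F, (Xmon γ t : ℤ)) ∈ ({-(#F : ℤ), 0, (#F : ℤ)} : Set ℤ))
    (w : Fin m → ℤˣ) :
    (#{p ∈ F ×ˢ F ×ˢ F | p.1 * p.2.1 * p.2.2 = w} : ℤ) = if w ∈ F then (#F : ℤ) ^ 2 else 0 := by
  have hcube (γ : Fin m → ZMod 2) :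
      (∑ t ∈ F, (Xmon γ t : ℤ)) ^ 3 = #F ^ 2 * ∑ t ∈ F, (Xmon γ t : ℤ) := by
    rcases hsum γ with h | h | h <;> rw [h] <;> ring
  have hexpand (γ : Fin m → ZMod 2) :
      (∑ t ∈ F, (Xmon γ t : ℤ)) ^ 3 * Xmon γ w =
        ∑ p ∈ F ×ˢ F ×ˢ F, (Xmon γ (p.1 * p.2.1 * p.2.2 * w) : ℤ) := by
    simp only [sum_product, Xmon_mul, Units.val_mul, pow_three', sum_mul, mul_sum]
    ac_rfl
  have hsingle (γ : Fin m → ZMod 2) :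
      (∑ t ∈ F, (Xmon γ t : ℤ)) * Xmon γ w = ∑ t ∈ F, (Xmon γ (t * w) : ℤ) := by
    simp only [Xmon_mul, Units.val_mul, sum_mul]
  have hmul_eq_one (x : Fin m → ℤˣ) : x * w = 1 ↔ x = w := by
    rw [mul_eq_one_iff_eq_inv, design_inv_eq_self]
  have h2m : (2 : ℤ) ^ m ≠ 0 := by positivity
  refine mul_left_cancel₀ h2m ?_
  calc (2 : ℤ) ^ m * #{p ∈ F ×ˢ F ×ˢ F | p.1 * p.2.1 * p.2.2 = w}
      = ∑ γ : Fin m → ZMod 2, (∑ t ∈ F, (Xmon γ t : ℤ)) ^ 3 * Xmon γ w := by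
        simp_rw [hexpand, sum_sum_Xmon_eq_card, hmul_eq_one]
    _ = #F ^ 2 * ∑ γ : Fin m → ZMod 2, ∑ t ∈ F, (Xmon γ (t * w) : ℤ) := by
        simp_rw [hcube, mul_assoc, hsingle, mul_sum]
    _ = 2 ^ m * if w ∈ F then (#F : ℤ) ^ 2 else 0 := by
        rw [sum_sum_Xmon_eq_card]
        simp_rw [hmul_eq_one, filter_eq']
        split_ifs <;> simp [mul_comm]

theorem mul_mul_mem_of_sum_Xmon_mem {F : Finset (Fin m → ℤˣ)}
    (hsum : ∀ γ : Fin m → ZMod 2,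
      (∑ t ∈ F, (Xmon γ t : ℤ)) ∈ ({-(#F : ℤ), 0, (#F : ℤ)} : Set ℤ))
    {t u v : Fin m → ℤˣ} (ht : t ∈ F) (hu : u ∈ F) (hv : v ∈ F) : t * u * v ∈ F := by
  by_contra hw
  have hpos : 0 < #{p ∈ F ×ˢ F ×ˢ F | p.1 * p.2.1 * p.2.2 = t * u * v} :=
    card_pos.2 ⟨(t, u, v), by simp [ht, hu, hv]⟩
  have := card_filter_mul_mul_eq hsum (t * u * v)
  rw [if_neg hw] at this
  omega

end Design

/-- A nonempty finite fraction `F ⊆ D = {-1,+1}^m` is regular (a coset of a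
subgroup of `D`) if and only if for every exponent vector `γ`, the sum
`∑_{t ∈ F} X^γ(t)` belongs to `{-|F|, 0, |F|}` (interactions are either
orthogonal or totally aliased on `F`). -/
theorem regular_iff_orthogonal_or_aliased (m : ℕ) (F : Finset (Fin m → ℤˣ))
    (hF : F.Nonempty) :
    (∃ (a : Fin m → ℤˣ) (H : Subgroup (Fin m → ℤˣ)),
        (F : Set (Fin m → ℤˣ)) = a • (H : Set (Fin m → ℤˣ))) ↔
    ∀ γ : Fin m → ZMod 2,
      (∑ t ∈ F, (Xmon γ t : ℤ)) ∈ ({-(F.card : ℤ), 0, (F.card : ℤ)} : Set ℤ) := by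
  constructor
  · rintro ⟨a, H, hFH⟩ γ
    exact sum_coe_units_mem_of_coe_eq_smul hFH (MonoidHom.mk' (Xmon γ) (Xmon_mul γ))
  · intro hsum
    obtain ⟨a, ha⟩ := hF
    obtain ⟨H, hH⟩ := exists_subgroup_eq_smul_of_mul_inv_mul_mem (F := (F : Set (Fin m → ℤˣ)))
      ha fun t ht u hu v hv => by
        rw [design_inv_eq_self]
        exact mul_mul_mem_of_sum_Xmon_mem hsum ht hu hv
    exact ⟨a, H, hH⟩
end

section
/- A nonempty fraction F ⊆ D = {−1,+1}^m is a coset of a subgroup of D if and only if its vanishing ideal I(F) = {p ∈ ℝ[x_1,…,x_m] : p(t) = 0 for all t ∈ F} (points of D viewed in ℝ^m via ℤˣ → ℝ) is a binomial ideal, i.e. is generated by polynomials of the form x^u − c·x^v with u, v ∈ ℕ^m monomial exponents and c ∈ {−1, +1}. -/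
/-!
Identify `t ∈ {±1}^m` with its point in `ℝ^m`. On such points a monomial `x^u` is a character
`χ_u` of `D` with values `±1`, so the binomial `x^u - ε x^v` vanishes at `t` iff
`χ_{u+v}(t) = ε`. Since `∏ i, (x_i + t_i)` vanishes at every point of `D` except `t`, a fraction
is the zero set in `D` of its vanishing ideal; if that ideal is generated by binomials, the
fraction is an intersection of fibres of characters, and a nonempty such intersection is a coset
of the intersection of their kernels.

Conversely, let `F = a • H`. Modulo binomials vanishing on `F`, every monomial `x^u` is congruent
to `±x^v` for any `v` with `χ_v = χ_u` on `H`. Fixing one such `v` per character of `H`, evaluation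
on `F` sends these monomials to distinct characters of `H`, which are linearly independent
(Dedekind), so a polynomial vanishing on `F` lies in the ideal spanned by these binomials.
-/

open Pointwise MvPolynomial

theorem LinearMap.ker_le_of_sup_span_eq_top {R M N ι : Type*} [Ring R] [AddCommGroup M]
    [AddCommGroup N] [Module R M] [Module R N] {f : M →ₗ[R] N} {K : Submodule R M} {e : ι → M}
    (hK : K ≤ ker f) (hspan : K ⊔ Submodule.span R (Set.range e) = ⊤)
    (hli : LinearIndependent R (f ∘ e)) : ker f ≤ K := by
  intro x hx
  obtain ⟨k, hk, y, hy, rfl⟩ := Submodule.mem_sup.1 (hspan ▸ Submodule.mem_top (x := x))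
  have hyker : y ∈ ker f := by
    rwa [mem_ker, map_add, mem_ker.1 (hK hk), zero_add] at hx
  have hy0 : y = 0 := Submodule.disjoint_def.1 (Submodule.range_ker_disjoint hli) y hy hyker
  simpa [hy0] using hk

theorem MonoidHom.setOf_forall_apply_eq_eq_smul_iInf_ker {G M ι : Type*} [Group G] [Group M]
    (ψ : ι → G →* M) (a : G) :
    {t | ∀ i, ψ i t = ψ i a} = a • ((⨅ i, (ψ i).ker : Subgroup G) : Set G) := by
  ext t
  simp only [Set.mem_ofPred_eq, Set.mem_smul_set_iff_inv_smul_mem, smul_eq_mul, SetLike.mem_coe,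
    Subgroup.mem_iInf, mem_ker, map_mul, map_inv, inv_mul_eq_one]
  exact forall_congr' fun _ => eq_comm

def unitsToReal : ℤˣ →* ℝ := (Int.castRingHom ℝ : ℤ →* ℝ).comp (Units.coeHom ℤ)

theorem unitsToReal_injective : Function.Injective unitsToReal := fun _ _ h =>
  Units.ext (Int.cast_injective (α := ℝ) h)

theorem unitsToReal_add_eq_zero_iff (x y : ℤˣ) : unitsToReal x + unitsToReal y = 0 ↔ x ≠ y := by
  rcases Int.units_eq_one_or x with rfl | rfl <;> rcases Int.units_eq_one_or y with rfl | rfl <;>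
    norm_num [unitsToReal]

theorem eq_one_or_eq_neg_one_iff_exists_unitsToReal (c : ℝ) :
    (c = 1 ∨ c = -1) ↔ ∃ ε : ℤˣ, unitsToReal ε = c := by
  constructor
  · rintro (rfl | rfl)
    exacts [⟨1, map_one _⟩, ⟨-1, by simp [unitsToReal]⟩]
  · rintro ⟨ε, rfl⟩
    rcases Int.units_eq_one_or ε with rfl | rfl <;> simp [unitsToReal]

section

variable {σ : Type*}

def signPoint (t : σ → ℤˣ) : σ → ℝ := fun i => ((t i : ℤ) : ℝ)

def IsBinomial (p : MvPolynomial σ ℝ) : Prop :=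
  ∃ (u v : σ →₀ ℕ) (c : ℝ), (c = 1 ∨ c = -1) ∧ p = monomial u 1 - monomial v c

def IsBinomialIdeal (I : Ideal (MvPolynomial σ ℝ)) : Prop :=
  ∃ B : Set (MvPolynomial σ ℝ), (∀ p ∈ B, IsBinomial p) ∧ I = Ideal.span B

theorem isBinomial_iff {p : MvPolynomial σ ℝ} :
    IsBinomial p ↔ ∃ (u v : σ →₀ ℕ) (ε : ℤˣ), p = monomial u 1 - monomial v (unitsToReal ε) := by
  simp only [IsBinomial, eq_one_or_eq_neg_one_iff_exists_unitsToReal]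
  constructor
  · rintro ⟨u, v, _, ⟨ε, rfl⟩, rfl⟩
    exact ⟨u, v, ε, rfl⟩
  · rintro ⟨u, v, ε, rfl⟩
    exact ⟨u, v, _, ⟨ε, rfl⟩, rfl⟩

noncomputable def cosetEval (a : σ → ℤˣ) (H : Subgroup (σ → ℤˣ)) :
    MvPolynomial σ ℝ →ₗ[ℝ] (H → ℝ) :=
  LinearMap.pi fun h => (aeval (signPoint (a * (h : σ → ℤˣ)))).toLinearMap

theorem mem_vanishingIdeal_smul_subgroup_iff {a : σ → ℤˣ} {H : Subgroup (σ → ℤˣ)}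
    {p : MvPolynomial σ ℝ} :
    p ∈ vanishingIdeal ℝ (signPoint '' (a • (H : Set (σ → ℤˣ)))) ↔ cosetEval a H p = 0 := by
  simp only [mem_vanishingIdeal_iff, ← Set.image_smul, Set.forall_mem_image, funext_iff,
    Subtype.forall, smul_eq_mul]
  rfl

end

section

variable {σ : Type*} [Fintype σ]

def monomialChar {M : Type*} [CommMonoid M] (u : σ →₀ ℕ) : (σ → M) →* M where
  toFun t := ∏ i, t i ^ u i
  map_one' := by simp
  map_mul' s t := by simp [mul_pow, Finset.prod_mul_distrib]

theorem monomialChar_add {M : Type*} [CommMonoid M] (u v : σ →₀ ℕ) :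
    monomialChar (M := M) (u + v) = monomialChar u * monomialChar v := by
  ext t
  simp [monomialChar, pow_add, Finset.prod_mul_distrib]

theorem eval_signPoint_monomial (t : σ → ℤˣ) (u : σ →₀ ℕ) (c : ℝ) :
    eval (signPoint t) (monomial u c) = c * unitsToReal (monomialChar u t) := by
  rw [eval_monomial, Finsupp.prod_fintype _ _ fun _ => pow_zero _]
  simp [monomialChar, unitsToReal, signPoint]

theorem eval_signPoint_binomial_eq_zero_iff (t : σ → ℤˣ) (u v : σ →₀ ℕ) (ε : ℤˣ) :
    eval (signPoint t) (monomial u 1 - monomial v (unitsToReal ε)) = 0 ↔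
      monomialChar (u + v) t = ε := by
  rw [map_sub, eval_signPoint_monomial, eval_signPoint_monomial, one_mul, sub_eq_zero, ← map_mul,
    unitsToReal_injective.eq_iff, monomialChar_add, MonoidHom.mul_apply,
    ← eq_mul_inv_iff_mul_eq, Int.units_inv_eq_self]

theorem eval_signPoint_prod_X_add_C_eq_zero_iff (s t : σ → ℤˣ) :
    eval (signPoint s) (∏ i, (X i + C (unitsToReal (t i)))) = 0 ↔ s ≠ t := by
  simp only [map_prod, map_add, eval_X, eval_C, Finset.prod_eq_zero_iff, Finset.mem_univ,
    true_and, Function.ne_iff]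
  exact exists_congr fun i => unitsToReal_add_eq_zero_iff (s i) (t i)

theorem signPoint_mem_zeroLocus_vanishingIdeal_iff {F : Set (σ → ℤˣ)} {t : σ → ℤˣ} :
    signPoint t ∈ zeroLocus ℝ (vanishingIdeal ℝ (signPoint '' F)) ↔ t ∈ F := by
  refine ⟨fun ht => ?_, fun ht => zeroLocus_vanishingIdeal_le _ (Set.mem_image_of_mem _ ht)⟩
  by_contra htF
  have hq : ∏ i, (X i + C (unitsToReal (t i))) ∈ vanishingIdeal ℝ (signPoint '' F) := by
    rintro _ ⟨s, hs, rfl⟩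
    rw [aeval_eq_eval, eval_signPoint_prod_X_add_C_eq_zero_iff]
    exact fun hst => htF (hst ▸ hs)
  have hqt := ht _ hq
  rw [aeval_eq_eval, eval_signPoint_prod_X_add_C_eq_zero_iff] at hqt
  exact hqt rfl

theorem exists_eq_smul_subgroup_of_isBinomialIdeal {F : Set (σ → ℤˣ)} (hF : F.Nonempty)
    (hI : IsBinomialIdeal (vanishingIdeal ℝ (signPoint '' F))) :
    ∃ (a : σ → ℤˣ) (H : Subgroup (σ → ℤˣ)), F = a • (H : Set (σ → ℤˣ)) := by
  obtain ⟨a, ha⟩ := hF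
  obtain ⟨B, hB, hIB⟩ := hI
  choose u v ε hp using fun p : B => isBinomial_iff.1 (hB p p.2)
  have hzero : ∀ t, t ∈ F ↔ ∀ p : B, monomialChar (u p + v p) t = ε p := by
    intro t
    rw [← signPoint_mem_zeroLocus_vanishingIdeal_iff, hIB, zeroLocus_span]
    simp only [Set.mem_ofPred_eq, aeval_eq_eval]
    exact Subtype.forall.symm.trans
      (forall_congr' fun p => hp p ▸ eval_signPoint_binomial_eq_zero_iff t _ _ _)
  refine ⟨a, ⨅ p : B, (monomialChar (u p + v p)).ker, ?_⟩
  rw [← MonoidHom.setOf_forall_apply_eq_eq_smul_iInf_ker _ a]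
  ext t
  simp only [hzero, Set.mem_ofPred_eq, (hzero a).1 ha]

def restrictedChar (H : Subgroup (σ → ℤˣ)) (u : σ →₀ ℕ) : H →* ℝ :=
  unitsToReal.comp ((monomialChar u).comp H.subtype)

variable {a : σ → ℤˣ} {H : Subgroup (σ → ℤˣ)}

theorem cosetEval_monomial (u : σ →₀ ℕ) (c : ℝ) :
    cosetEval a H (monomial u c) =
      (c * unitsToReal (monomialChar u a)) • ⇑(restrictedChar H u) := by
  funext h
  simp [cosetEval, restrictedChar, eval_signPoint_monomial, mul_assoc]

theorem binomial_mem_vanishingIdeal_smul_subgroup {u v : σ →₀ ℕ}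
    (huv : restrictedChar H u = restrictedChar H v) :
    monomial u 1 - monomial v (unitsToReal (monomialChar u a * monomialChar v a)) ∈
      vanishingIdeal ℝ (signPoint '' (a • (H : Set (σ → ℤˣ)))) := by
  rw [mem_vanishingIdeal_smul_subgroup_iff, map_sub, cosetEval_monomial, cosetEval_monomial, huv,
    map_mul, mul_assoc, ← map_mul, Int.units_mul_self, map_one, mul_one, one_mul, sub_self]

theorem isBinomialIdeal_vanishingIdeal_smul_subgroup (a : σ → ℤˣ) (H : Subgroup (σ → ℤˣ)) :
    IsBinomialIdeal (vanishingIdeal ℝ (signPoint '' (a • (H : Set (σ → ℤˣ))))) := by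
  set I := vanishingIdeal ℝ (signPoint '' (a • (H : Set (σ → ℤˣ))))
  set B := {p | IsBinomial p ∧ p ∈ I}
  obtain ⟨S, hS, hinj⟩ := Set.exists_image_eq_and_injOn Set.univ (restrictedChar H)
  -- the coefficient `χ_v(a) = ±1` makes `cosetEval a H (e v)` the character `χ_v|_H` itself
  let e : S → MvPolynomial σ ℝ := fun v => monomial v (unitsToReal (monomialChar v a))
  have hfe : cosetEval a H ∘ e = fun v : S => ⇑(restrictedChar H v) := by
    funext v
    rw [Function.comp_apply, cosetEval_monomial, ← map_mul, Int.units_mul_self, map_one, one_smul]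
  have hli : LinearIndependent ℝ (cosetEval a H ∘ e) :=
    hfe ▸ (linearIndependent_monoidHom H ℝ).comp _ (Set.injOn_iff_injective.1 hinj)
  have hspan : (Ideal.span B).restrictScalars ℝ ⊔ Submodule.span ℝ (Set.range e) = ⊤ := by
    refine Submodule.eq_top_iff'.2 fun p => ?_
    induction p using MvPolynomial.induction_on' with
    | monomial u c =>
      obtain ⟨v, hv, huv⟩ : restrictedChar H u ∈ restrictedChar H '' S :=
        hS ▸ Set.mem_image_of_mem _ trivial
      have hb : monomial u 1 - monomial v (unitsToReal (monomialChar u a * monomialChar v a)) ∈ B :=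
        ⟨isBinomial_iff.2 ⟨u, v, _, rfl⟩, binomial_mem_vanishingIdeal_smul_subgroup huv.symm⟩
      refine Submodule.mem_sup.2 ⟨_, Submodule.smul_mem _ c (Ideal.subset_span hb), _,
        Submodule.smul_mem _ (c * unitsToReal (monomialChar u a))
          (Submodule.subset_span ⟨⟨v, hv⟩, rfl⟩), ?_⟩
      simp [e, smul_sub, smul_monomial, map_mul, mul_assoc]
    | add p q hp hq => exact Submodule.add_mem _ hp hq
  have hBI : Ideal.span B ≤ I := Ideal.span_le.2 fun p hp => hp.2
  refine ⟨B, fun p hp => hp.1, le_antisymm (fun p hp => ?_) hBI⟩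
  exact LinearMap.ker_le_of_sup_span_eq_top
    (fun q hq => mem_vanishingIdeal_smul_subgroup_iff.1 (hBI hq)) hspan hli
    (mem_vanishingIdeal_smul_subgroup_iff.1 hp)

end

/-- A nonempty fraction `F ⊆ D = {-1,+1}^m` is regular (a coset of a subgroup
of `D`) if and only if its vanishing ideal
`I(F) = {p ∈ ℝ[x₁,…,x_m] : p(t) = 0 for all t ∈ F}` is a binomial ideal,
i.e. generated by polynomials of the form `x^u - c·x^v` with `c = ±1`. -/
theorem regular_iff_binomial_ideal (m : ℕ) (F : Set (Fin m → ℤˣ)) (hF : F.Nonempty)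
    (I : Ideal (MvPolynomial (Fin m) ℝ))
    (hI : ∀ p : MvPolynomial (Fin m) ℝ,
      p ∈ I ↔ ∀ t ∈ F, MvPolynomial.eval (fun i => ((t i : ℤ) : ℝ)) p = 0) :
    (∃ (a : Fin m → ℤˣ) (H : Subgroup (Fin m → ℤˣ)),
        F = a • (H : Set (Fin m → ℤˣ))) ↔
    ∃ B : Set (MvPolynomial (Fin m) ℝ),
      (∀ p ∈ B, ∃ (u v : Fin m →₀ ℕ) (c : ℝ), (c = 1 ∨ c = -1) ∧
        p = MvPolynomial.monomial u (1 : ℝ) - MvPolynomial.monomial v c) ∧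
      I = Ideal.span B := by
  obtain rfl : I = vanishingIdeal ℝ (signPoint '' F) := by
    ext p
    rw [hI, mem_vanishingIdeal_iff, Set.forall_mem_image]
    rfl
  constructor
  · rintro ⟨a, H, rfl⟩
    exact isBinomialIdeal_vanishingIdeal_smul_subgroup a H
  · exact exists_eq_smul_subgroup_of_isBinomialIdeal hF
end

section
/- Let F ⊆ D = {−1,+1}^m be any fraction with indicator coefficients b_β = 2^{−m} · Σ_{t ∈ F} (X^β(t) : ℝ), let α_1, …, α_k ∈ Fin m → ZMod 2 and e_1, …, e_k ∈ {−1,+1}, and let R = {t ∈ D : X^{α_j}(t) = e_j for all j = 1,…,k}. Then the number of points of F ∩ R satisfies (|F ∩ R| : ℝ) = 2^{m−k} · Σ_{S ⊆ {1,…,k}} (∏_{j ∈ S} e_j) · b_{Σ_{j ∈ S} α_j}, where the sum runs over all subsets S of {1,…,k} and Σ_{j ∈ S} α_j is computed in (ZMod 2)^m. -/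
/-! Expanding `∏ⱼ (eⱼ X^{αⱼ}(t) + 1)` in two ways gives the result: each factor is `2` or `0`
according as `X^{αⱼ}(t) = eⱼ` or not, so the product is `2ᵏ` times the indicator of `R`; and since
`α ↦ X^α(t)` turns addition into multiplication, the product is also
`∑_S (∏_{j ∈ S} eⱼ) X^{∑_{j ∈ S} αⱼ}(t)`. Summing over `t ∈ F` yields `2ᵏ |F ∩ R| = 2ᵐ ∑_S … b_{…}`. -/

open scoped Classical

open Finset

lemma Int.units_mul_add_one_eq_ite (u v : ℤˣ) :
    ((u : ℤ) : ℝ) * ((v : ℤ) : ℝ) + 1 = if v = u then 2 else 0 := by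
  rcases Int.units_eq_one_or u with rfl | rfl <;>
    rcases Int.units_eq_one_or v with rfl | rfl <;> norm_num [neg_units_ne_self]

lemma prod_units_mul_add_one_eq_ite {ι : Type*} [Fintype ι] (e v : ι → ℤˣ) :
    ∏ j, (((e j : ℤ) : ℝ) * ((v j : ℤ) : ℝ) + 1) =
      if ∀ j, v j = e j then 2 ^ Fintype.card ι else 0 := by
  simp_rw [Int.units_mul_add_one_eq_ite]
  split_ifs with h
  · simp [h]
  · push Not at h
    obtain ⟨j, hj⟩ := h
    exact prod_eq_zero (mem_univ j) (if_neg hj)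

section Xmon

variable {m : ℕ}

lemma Xmon_eq_prod_ite (γ : Fin m → ZMod 2) (t : Fin m → ℤˣ) :
    Xmon γ t = ∏ i, if γ i = 1 then t i else 1 :=
  prod_filter _ _

@[simp]
lemma Xmon_zero (t : Fin m → ℤˣ) : Xmon 0 t = 1 := by
  simp [Xmon_eq_prod_ite]

lemma Xmon_add (β γ : Fin m → ZMod 2) (t : Fin m → ℤˣ) :
    Xmon (β + γ) t = Xmon β t * Xmon γ t := by
  simp only [Xmon_eq_prod_ite, ← prod_mul_distrib, Pi.add_apply]
  refine prod_congr rfl fun i _ => ?_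
  have hZMod2 : ∀ a : ZMod 2, a = 0 ∨ a = 1 := by decide
  rcases hZMod2 (β i) with hβ | hβ <;> rcases hZMod2 (γ i) with hγ | hγ <;>
    simp [hβ, hγ, Int.units_mul_self]

lemma Xmon_sum {ι : Type*} (α : ι → Fin m → ZMod 2) (S : Finset ι) (t : Fin m → ℤˣ) :
    Xmon (∑ j ∈ S, α j) t = ∏ j ∈ S, Xmon (α j) t := by
  induction S using Finset.induction_on with
  | empty => simp
  | insert j S hj ih => rw [sum_insert hj, prod_insert hj, Xmon_add, ih]

lemma prod_mul_Xmon_add_one_eq_sum {ι : Type*} [Fintype ι] (α : ι → Fin m → ZMod 2)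
    (e : ι → ℤˣ) (t : Fin m → ℤˣ) :
    ∏ j, (((e j : ℤ) : ℝ) * ((Xmon (α j) t : ℤ) : ℝ) + 1) =
      ∑ S : Finset ι, (∏ j ∈ S, ((e j : ℤ) : ℝ)) * ((Xmon (∑ j ∈ S, α j) t : ℤ) : ℝ) := by
  rw [prod_add, ← powerset_univ]
  refine sum_congr rfl fun S _ => ?_
  rw [prod_const_one, mul_one, prod_mul_distrib, Xmon_sum]
  push_cast
  rfl

end Xmon

/-- Counting the points of `F ∩ R` for a regular fraction
`R = {t : X^{α_j}(t) = e_j, j = 1,…,k}` in terms of the indicator coefficients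
`b_β = 2^{-m} ∑_{t ∈ F} X^β(t)` of `F`:
`|F ∩ R| = 2^{m-k} ∑_{S ⊆ {1,…,k}} (∏_{j ∈ S} e_j) b_{∑_{j ∈ S} α_j}`. -/
theorem card_inter_regular (m k : ℕ) (F : Finset (Fin m → ℤˣ))
    (b : (Fin m → ZMod 2) → ℝ)
    (hb : ∀ β, b β = (1 / 2 ^ m : ℝ) * ∑ t ∈ F, ((Xmon β t : ℤ) : ℝ))
    (α : Fin k → Fin m → ZMod 2) (e : Fin k → ℤˣ) :
    ((F.filter fun t => ∀ j, Xmon (α j) t = e j).card : ℝ) =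
      (2 : ℝ) ^ ((m : ℤ) - (k : ℤ)) *
        ∑ S : Finset (Fin k), (∏ j ∈ S, ((e j : ℤ) : ℝ)) * b (∑ j ∈ S, α j) := by
  have hsum : ∀ β, ∑ t ∈ F, ((Xmon β t : ℤ) : ℝ) = 2 ^ m * b β := fun β => by
    rw [hb β]; field_simp
  have hcount : ((F.filter fun t => ∀ j, Xmon (α j) t = e j).card : ℝ) * 2 ^ k =
      2 ^ m * ∑ S : Finset (Fin k), (∏ j ∈ S, ((e j : ℤ) : ℝ)) * b (∑ j ∈ S, α j) :=
    calc _ = ∑ t ∈ F, ∏ j, (((e j : ℤ) : ℝ) * ((Xmon (α j) t : ℤ) : ℝ) + 1) := by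
            rw [sum_congr rfl fun t _ => prod_units_mul_add_one_eq_ite e fun j => Xmon (α j) t]
            simp only [sum_ite, sum_const_zero, sum_const, Fintype.card_fin, nsmul_eq_mul,
              add_zero]
      _ = ∑ S : Finset (Fin k), (∏ j ∈ S, ((e j : ℤ) : ℝ)) *
            ∑ t ∈ F, ((Xmon (∑ j ∈ S, α j) t : ℤ) : ℝ) := by
            simp_rw [prod_mul_Xmon_add_one_eq_sum, mul_sum]
            exact sum_comm
      _ = _ := by simp_rw [hsum, mul_sum, mul_left_comm (2 ^ m : ℝ)]
  rw [zpow_sub₀ two_ne_zero, zpow_natCast, zpow_natCast, div_mul_eq_mul_div,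
    eq_div_iff (by positivity), hcount]
end
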